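/- Let G_0 = G and let W_1, …, W_r be such that each W_t is a clique of G_{t−1} and G_t = G_{t−1}|W_t, define F_0 = STAB(G), F_t = {x ∈ STAB(G) : x_{W_j} = 1 for j = 1,…,t}, and S_t = S(G) ∩ F_t. Let cᵀx ≤ d be a valid inequality for STAB(G_r). Define f_r(x) = cᵀx and, for ℓ = r down to 1, λ^S_ℓ = max{ f_ℓ(x) − d : x ∈ S_{ℓ−1}, x_{W_ℓ} = 0 } (with the convention max ∅ = 0) and f_{ℓ−1}(x) = f_ℓ(x) + λ^S_ℓ (x_{W_ℓ} − 1). Then for every t ∈ {0,…,r}, the inequality f_t(x) ≤ d is valid for F_t. -/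

import Mathlib

open Finset

variable {V : Type*}

/-- A stable (independent) set of a graph: pairwise non-adjacent vertices. -/
def IsStable (G : SimpleGraph V) (S : Finset V) : Prop :=
  ∀ u ∈ S, ∀ v ∈ S, ¬ G.Adj u v

/-- The characteristic vectors of stable sets of `G`. -/
def stableVecs [DecidableEq V] (G : SimpleGraph V) : Set (V → ℝ) :=
  {x | ∃ S : Finset V, IsStable G S ∧ x = fun v => if v ∈ S then (1 : ℝ) else 0}

/-- The stable set polytope `STAB(G)`. -/
def STAB [DecidableEq V] (G : SimpleGraph V) : Set (V → ℝ) :=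
  convexHull ℝ (stableVecs G)

/-- `x_W = ∑_{v ∈ W} x_v`. -/
def vsum (W : Finset V) (x : V → ℝ) : ℝ := ∑ v ∈ W, x v

/-- The clique projection `G|W`: add every non-edge `uv` with `W ⊆ N(u) ∪ N(v)`. -/
def cliqueProj (G : SimpleGraph V) (W : Finset V) : SimpleGraph V where
  Adj u v := G.Adj u v ∨ (u ≠ v ∧ ¬G.Adj u v ∧ ∀ w ∈ W, G.Adj w u ∨ G.Adj w v)
  symm := by
    constructor
    rintro u v (h | ⟨hne, hna, h⟩)
    · exact Or.inl h.symm
    · exact Or.inr ⟨hne.symm, fun h' => hna h'.symm, fun w hw => (h w hw).symm⟩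
  loopless := by
    constructor
    rintro u (h | ⟨hne, _, _⟩)
    · first | exact G.irrefl h | exact G.loopless.irrefl u h
    · exact hne rfl

/-- Iterated projected graphs: `G_0 = G`, `G_t = G_{t-1} | W_t`. -/
def projSeq (G : SimpleGraph V) (W : ℕ → Finset V) : ℕ → SimpleGraph V
  | 0 => G
  | t + 1 => cliqueProj (projSeq G W t) (W (t + 1))

/-- `F_t = {x ∈ STAB(G) : x_{W_j} = 1, j = 1, …, t}`. -/
def Fface [DecidableEq V] (G : SimpleGraph V) (W : ℕ → Finset V) (t : ℕ) : Set (V → ℝ) :=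
  {x ∈ STAB G | ∀ j ∈ Finset.Icc 1 t, vsum (W j) x = 1}

/-- `α(G[H], c)`: the maximum `c`-weight of a stable set of `G` contained in `H`. -/
noncomputable def alphaW (G : SimpleGraph V) (H : Finset V) (c : V → ℝ) : ℝ :=
  sSup {r : ℝ | ∃ S : Finset V, S ⊆ H ∧ IsStable G S ∧ r = ∑ v ∈ S, c v}

/-- `α(G[H])`: the maximum cardinality of a stable set of `G` contained in `H`. -/
noncomputable def alphaOn (G : SimpleGraph V) (H : Finset V) : ℕ :=
  sSup {k : ℕ | ∃ S : Finset V, S ⊆ H ∧ IsStable G S ∧ S.card = k}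

/-- The stability number `α(G)`. -/
noncomputable def alphaNum [Fintype V] (G : SimpleGraph V) : ℕ :=
  sSup {k : ℕ | ∃ S : Finset V, IsStable G S ∧ S.card = k}

/-- `cᵀx`. -/
def dotp [Fintype V] (c x : V → ℝ) : ℝ := ∑ v, c v * x v

/-- The affine dimension of a set of points. -/
noncomputable def affDim (s : Set (V → ℝ)) : ℕ := Module.finrank ℝ (vectorSpan ℝ s)

/-- Strong hypertree (with hyperedges of size `k`). -/
inductive IsStrongHypertree [DecidableEq V] (k : ℕ) : Finset V → Finset (Finset V) → Prop
  | base (V' : Finset V) : IsStrongHypertree k V' {V'}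
  | step (V' : Finset V) (E : Finset (Finset V)) (v : V) (Wi : Finset V) :
      v ∈ V' → v ∈ Wi → Wi ∈ E →
      (∃ Wj ∈ E, Wj ≠ Wi ∧ (Wi ∩ Wj).card = k - 1) →
      IsStrongHypertree k (V'.erase v) (E.erase Wi) →
      IsStrongHypertree k V' E

/-- Condition (I): `|W_t| = k` and the subgraph of `G_{t-1}` induced by `W_1 ∪ ⋯ ∪ W_t`
is `k`-partite with stable vertex classes `V_t^1, …, V_t^k`. -/
def CondI [DecidableEq V] (G : SimpleGraph V) (W : ℕ → Finset V)
    (Vc : ℕ → ℕ → Finset V) (k t : ℕ) : Prop :=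
  (W t).card = k ∧
  (Finset.Icc 1 k).biUnion (Vc t) = (Finset.Icc 1 t).biUnion W ∧
  (∀ i ∈ Finset.Icc 1 k, ∀ j ∈ Finset.Icc 1 k, i ≠ j → Disjoint (Vc t i) (Vc t j)) ∧
  (∀ i ∈ Finset.Icc 1 k, ∀ u ∈ Vc t i, ∀ v ∈ Vc t i, ¬(projSeq G W (t - 1)).Adj u v)

/-- Condition (II): `T_t = (V_t, {W_1, …, W_t})` is a strong hypertree. -/
def CondII [DecidableEq V] (W : ℕ → Finset V) (Vc : ℕ → ℕ → Finset V) (k t : ℕ) : Prop :=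
  IsStrongHypertree k ((Finset.Icc 1 k).biUnion (Vc t)) ((Finset.Icc 1 t).image W)

/-- Condition (III): every `w ∉ V_t` misses some class `V_t^i` in `G_{t-1}`. -/
def CondIII [DecidableEq V] (G : SimpleGraph V) (W : ℕ → Finset V)
    (Vc : ℕ → ℕ → Finset V) (k t : ℕ) : Prop :=
  ∀ w : V, w ∉ (Finset.Icc 1 k).biUnion (Vc t) →
    ∃ i ∈ Finset.Icc 1 k, ∀ u ∈ Vc t i, ¬(projSeq G W (t - 1)).Adj w u

/-- Condition (IV). -/
def CondIV [Fintype V] [DecidableEq V] (G : SimpleGraph V) (W : ℕ → Finset V)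
    (Vc : ℕ → ℕ → Finset V) (k r : ℕ) : Prop :=
  ∀ i ∈ Finset.Icc 1 (k - 1), ∀ t ∈ Finset.Icc 1 r, ∀ v ∈ W t ∩ Vc t i,
    ∀ w ∈ Finset.univ \ (Finset.Icc 1 k).biUnion (Vc r),
      (∃ z ∈ Vc r i, (projSeq G W r).Adj z w) →
      (G.Adj v w ∨ ∃ t' ∈ Finset.Icc 1 r,
        (projSeq G W (t' - 1)).IsClique (W t : Set V) ∧
        W t ≠ W t' ∧ (W t ∩ W t').card = k - 1 ∧
        v ∉ W t' ∧ ∃ v' ∈ W t' ∩ Vc r i, (projSeq G W (t' - 1)).Adj v' w)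

/-- Condition (V): no vertex of `V_t^k` has a neighbor in `V_r^0` in the graph `G_r`. -/
def CondV [Fintype V] [DecidableEq V] (G : SimpleGraph V) (W : ℕ → Finset V)
    (Vc : ℕ → ℕ → Finset V) (k r t : ℕ) : Prop :=
  ∀ v ∈ Vc t k, ∀ w ∈ Finset.univ \ (Finset.Icc 1 k).biUnion (Vc r),
    ¬(projSeq G W r).Adj v w

/-- `STAB(G[H])`, embedded in `ℝ^V` (coordinates outside `H` are zero). -/
def STABon [DecidableEq V] (G : SimpleGraph V) (H : Finset V) : Set (V → ℝ) :=
  convexHull ℝ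
    {x | ∃ S : Finset V, S ⊆ H ∧ IsStable G S ∧ x = fun v => if v ∈ S then (1 : ℝ) else 0}

/-!
`F_t` is a face of `STAB(G)`: a stable set of `G` meeting each of `W_1, …, W_t` is stable in
`G_t`, so it meets the clique `W_{t+1}` of `G_t` at most once, i.e. `x_{W_{t+1}} ≤ 1` is valid on
`S_t`, and cutting `conv(S_t)` with the tight hyperplane `x_{W_{t+1}} = 1` gives `conv(S_{t+1})`.
Hence `F_t = conv(S_t)`, and since `f_t` is affine it suffices to prove `f_t ≤ d` on `S_t`. This
is a downward induction on `t`: on a point of `S_t` meeting `W_{t+1}` the correction term of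
`f_t` vanishes and the point lies in `S_{t+1}`, and on a point missing `W_{t+1}` the correction
is `-λ_{t+1}`, which is exactly what `λ_{t+1}` is chosen to absorb.
-/

lemma mem_convexHull_inter_of_map_eq {𝕜 E : Type*} [Field 𝕜] [LinearOrder 𝕜]
    [IsStrictOrderedRing 𝕜] [AddCommGroup E] [Module 𝕜 E] {s : Set E} (ℓ : E →ₗ[𝕜] 𝕜) {b : 𝕜}
    (hs : ∀ y ∈ s, ℓ y ≤ b) {x : E} (hx : x ∈ convexHull 𝕜 s) (hxb : ℓ x = b) :
    x ∈ convexHull 𝕜 (s ∩ {y | ℓ y = b}) := by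
  classical
  rw [_root_.convexHull_eq] at hx
  obtain ⟨ι, t, w, z, hw₀, hw₁, hz, rfl⟩ := hx
  have hgap : ∑ i ∈ t, w i * (b - ℓ (z i)) = 0 := by
    rw [centerMass_eq_of_sum_1 _ _ hw₁, map_sum] at hxb
    simp only [map_smul, smul_eq_mul] at hxb
    simp [mul_sub, sum_sub_distrib, ← sum_mul, hw₁, hxb]
  have htight : ∀ i ∈ t, w i ≠ 0 → ℓ (z i) = b := by
    intro i hi hwi
    have hterm := (sum_eq_zero_iff_of_nonneg fun j hj =>
      mul_nonneg (hw₀ j hj) (sub_nonneg.2 (hs _ (hz j hj)))).1 hgap i hi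
    linarith [(mul_eq_zero.1 hterm).resolve_left hwi]
  rw [← t.centerMass_filter_ne_zero]
  refine t.filter _ |>.centerMass_mem_convexHull (fun i hi => hw₀ i (mem_filter.1 hi).1) ?_ ?_
  · rw [sum_filter_ne_zero, hw₁]
    exact one_pos
  · intro i hi
    obtain ⟨hit, hwi⟩ := mem_filter.1 hi
    exact ⟨hz i hit, htight i hit hwi⟩

def vsumLinearMap (W : Finset V) : (V → ℝ) →ₗ[ℝ] ℝ := ∑ v ∈ W, LinearMap.proj v

@[simp]
lemma vsumLinearMap_apply (W : Finset V) (x : V → ℝ) : vsumLinearMap W x = vsum W x := by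
  simp [vsumLinearMap, vsum]

def dotpLinearMap [Fintype V] (c : V → ℝ) : (V → ℝ) →ₗ[ℝ] ℝ := ∑ v, c v • LinearMap.proj v

@[simp]
lemma dotpLinearMap_apply [Fintype V] (c x : V → ℝ) : dotpLinearMap c x = dotp c x := by
  simp [dotpLinearMap, dotp]

section StableVectors

variable [DecidableEq V] {G : SimpleGraph V} {W : ℕ → Finset V}

lemma vsum_ite_mem (W S : Finset V) :
    vsum W (fun v => if v ∈ S then (1 : ℝ) else 0) = #(W ∩ S) := by
  simp [vsum, sum_ite_mem]

lemma IsStable.card_inter_le_one {H : SimpleGraph V} {W S : Finset V} (hS : IsStable H S)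
    (hW : H.IsClique (W : Set V)) : #(W ∩ S) ≤ 1 := by
  refine card_le_one.2 fun u hu v hv => ?_
  rw [mem_inter] at hu hv
  by_contra huv
  exact hS u hu.2 v hv.2 (hW hu.1 hv.1 huv)

lemma IsStable.cliqueProj {H : SimpleGraph V} {W S : Finset V} (hS : IsStable H S)
    (hWS : (W ∩ S).Nonempty) : IsStable (cliqueProj H W) S := by
  obtain ⟨w, hw⟩ := hWS
  rw [mem_inter] at hw
  rintro u hu v hv (huv | ⟨-, -, hcover⟩)
  · exact hS u hu v hv huv
  · rcases hcover w hw.1 with hwu | hwv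
    exacts [hS w hw.2 u hu hwu, hS w hw.2 v hv hwv]

lemma stableVecs_finite [Fintype V] (G : SimpleGraph V) : (stableVecs G).Finite :=
  (Set.finite_range fun S : Finset V => fun v => if v ∈ S then (1 : ℝ) else 0).subset
    (by rintro x ⟨S, -, rfl⟩; exact ⟨S, rfl⟩)

lemma stableVecs_subset_STAB (G : SimpleGraph V) : stableVecs G ⊆ STAB G :=
  subset_convexHull ℝ _

lemma Fface_zero (G : SimpleGraph V) (W : ℕ → Finset V) : Fface G W 0 = STAB G := by
  simp [Fface]

lemma Fface_succ (G : SimpleGraph V) (W : ℕ → Finset V) (t : ℕ) :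
    Fface G W (t + 1) = Fface G W t ∩ {x | vsum (W (t + 1)) x = 1} := by
  ext x
  simp only [Fface, Set.mem_inter_iff, Set.mem_ofPred_eq, mem_Icc]
  constructor
  · rintro ⟨hx, hW⟩
    exact ⟨⟨hx, fun j hj => hW j ⟨hj.1, by omega⟩⟩, hW (t + 1) ⟨by omega, le_rfl⟩⟩
  · rintro ⟨⟨hx, hW⟩, hlast⟩
    refine ⟨hx, fun j hj => ?_⟩
    rcases hj.2.lt_or_eq with hlt | rfl
    exacts [hW j ⟨hj.1, by omega⟩, hlast]

lemma exists_isStable_projSeq_of_mem {t : ℕ} {x : V → ℝ} (hx : x ∈ stableVecs G ∩ Fface G W t) :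
    ∃ S, IsStable (projSeq G W t) S ∧ x = fun v => if v ∈ S then (1 : ℝ) else 0 := by
  induction t with
  | zero => exact hx.1
  | succ t ih =>
    rw [Fface_succ] at hx
    obtain ⟨S, hS, rfl⟩ := ih ⟨hx.1, hx.2.1⟩
    have hmeet : #(W (t + 1) ∩ S) = 1 := by exact_mod_cast (vsum_ite_mem _ S).symm.trans hx.2.2
    exact ⟨S, hS.cliqueProj (card_pos.1 (by omega)), rfl⟩

lemma vsum_eq_zero_or_one_of_mem {t : ℕ} {K : Finset V}
    (hK : (projSeq G W t).IsClique (K : Set V)) {x : V → ℝ}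
    (hx : x ∈ stableVecs G ∩ Fface G W t) : vsum K x = 0 ∨ vsum K x = 1 := by
  obtain ⟨S, hS, rfl⟩ := exists_isStable_projSeq_of_mem hx
  rw [vsum_ite_mem]
  rcases Nat.le_one_iff_eq_zero_or_eq_one.1 (hS.card_inter_le_one hK) with h | h <;> simp [h]

lemma Fface_subset_convexHull {t : ℕ}
    (hclique : ∀ j < t, (projSeq G W j).IsClique (W (j + 1) : Set V)) :
    Fface G W t ⊆ convexHull ℝ (stableVecs G ∩ Fface G W t) := by
  induction t with
  | zero => rw [Fface_zero, Set.inter_eq_left.2 (stableVecs_subset_STAB G)]; rfl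
  | succ t ih =>
    intro x hx
    rw [Fface_succ] at hx ⊢
    have hle : ∀ y ∈ stableVecs G ∩ Fface G W t, vsumLinearMap (W (t + 1)) y ≤ 1 := by
      intro y hy
      rcases vsum_eq_zero_or_one_of_mem (hclique t t.lt_succ_self) hy with h | h <;> simp [h]
    have hx' := mem_convexHull_inter_of_map_eq _ hle
      (ih (fun j hj => hclique j (by omega)) hx.1) (by simpa using hx.2)
    simpa [Set.inter_assoc] using hx'

end StableVectors

section Lifting

variable [Fintype V] {G : SimpleGraph V} {W : ℕ → Finset V} {r : ℕ}
  {c : V → ℝ} {d : ℝ} {f : ℕ → (V → ℝ) → ℝ} {lamS : ℕ → ℝ}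

lemma exists_affineMap_eq_of_lift (hfr : ∀ x, f r x = dotp c x)
    (hrec : ∀ l < r, ∀ x, f l x = f (l + 1) x + lamS (l + 1) * (vsum (W (l + 1)) x - 1))
    {t : ℕ} (ht : t ≤ r) : ∃ φ : (V → ℝ) →ᵃ[ℝ] ℝ, ⇑φ = f t := by
  induction ht using Nat.decreasingInduction with
  | self => exact ⟨(dotpLinearMap c).toAffineMap, funext fun x => by simp [hfr]⟩
  | of_succ t ht ih =>
    obtain ⟨φ, hφ⟩ := ih
    refine ⟨φ + lamS (t + 1) • ((vsumLinearMap (W (t + 1))).toAffineMap -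
      AffineMap.const ℝ (V → ℝ) (1 : ℝ)), funext fun x => ?_⟩
    simp [hrec t ht x, ← hφ]

lemma lift_le_of_mem_stableVecs_inter_Fface [DecidableEq V]
    (hclique : ∀ t < r, (projSeq G W t).IsClique (W (t + 1) : Set V))
    (hvalid : ∀ x ∈ STAB (projSeq G W r), dotp c x ≤ d) (hfr : ∀ x, f r x = dotp c x)
    (hlam : ∀ l < r, ∀ x ∈ stableVecs G ∩ Fface G W l, vsum (W (l + 1)) x = 0 →
      f (l + 1) x - d ≤ lamS (l + 1))
    (hrec : ∀ l < r, ∀ x, f l x = f (l + 1) x + lamS (l + 1) * (vsum (W (l + 1)) x - 1))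
    {t : ℕ} (ht : t ≤ r) {x : V → ℝ} (hx : x ∈ stableVecs G ∩ Fface G W t) : f t x ≤ d := by
  induction ht using Nat.decreasingInduction generalizing x with
  | self =>
    obtain ⟨S, hS, rfl⟩ := exists_isStable_projSeq_of_mem hx
    rw [hfr]
    exact hvalid _ (stableVecs_subset_STAB _ ⟨S, hS, rfl⟩)
  | of_succ t ht ih =>
    rw [hrec t ht x]
    rcases vsum_eq_zero_or_one_of_mem (hclique t ht) hx with h | h
    · rw [h]
      linarith [hlam t ht x hx h]
    · rw [h, sub_self, mul_zero, add_zero]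
      exact ih ⟨hx.1, by rw [Fface_succ]; exact ⟨hx.2, h⟩⟩

end Lifting

/-- validity of the strengthened lifting procedure. -/
theorem stmt8 {V : Type*} [Fintype V] [DecidableEq V] (G : SimpleGraph V)
    (r : ℕ) (W : ℕ → Finset V)
    (hclique : ∀ t ∈ Finset.Icc 1 r, (projSeq G W (t - 1)).IsClique (W t : Set V))
    (c : V → ℝ) (d : ℝ)
    (hvalid : ∀ x ∈ STAB (projSeq G W r), dotp c x ≤ d)
    (f : ℕ → (V → ℝ) → ℝ) (lamS : ℕ → ℝ)
    (hfr : ∀ x, f r x = dotp c x)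
    (hlam : ∀ l ∈ Finset.Icc 1 r, lamS l =
      sSup {y : ℝ | ∃ x ∈ stableVecs G ∩ Fface G W (l - 1),
        vsum (W l) x = 0 ∧ y = f l x - d})
    (hrec : ∀ l ∈ Finset.Icc 1 r, ∀ x,
      f (l - 1) x = f l x + lamS l * (vsum (W l) x - 1)) :
    ∀ t ≤ r, ∀ x ∈ Fface G W t, f t x ≤ d := by
  have hmem {l : ℕ} (hl : l < r) : l + 1 ∈ Icc 1 r := mem_Icc.2 ⟨by omega, hl⟩
  have hclique' : ∀ l < r, (projSeq G W l).IsClique (W (l + 1) : Set V) := fun l hl => by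
    simpa using hclique (l + 1) (hmem hl)
  have hrec' : ∀ l < r, ∀ x, f l x = f (l + 1) x + lamS (l + 1) * (vsum (W (l + 1)) x - 1) :=
    fun l hl => by simpa using hrec (l + 1) (hmem hl)
  have hlam' : ∀ l < r, ∀ x ∈ stableVecs G ∩ Fface G W l, vsum (W (l + 1)) x = 0 →
      f (l + 1) x - d ≤ lamS (l + 1) := by
    intro l hl x hx h0
    rw [hlam (l + 1) (hmem hl), add_tsub_cancel_right]
    refine le_csSup (((stableVecs_finite G).image fun x => f (l + 1) x - d).subset ?_).bddAbove
      ⟨x, hx, h0, rfl⟩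
    rintro _ ⟨y, hy, -, rfl⟩
    exact ⟨y, hy.1, rfl⟩
  intro t ht x hx
  obtain ⟨φ, hφ⟩ := exists_affineMap_eq_of_lift hfr hrec' ht
  have hS : stableVecs G ∩ Fface G W t ⊆ φ ⁻¹' Set.Iic d := fun y hy => by
    simpa [hφ] using lift_le_of_mem_stableVecs_inter_Fface hclique' hvalid hfr hlam' hrec' ht hy
  simpa [hφ] using convexHull_min hS ((convex_Iic d).affine_preimage φ)
    (Fface_subset_convexHull (fun j hj => hclique' j (by omega)) hx)
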